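/- Let w : ∏_k A_k → ∏_k X_k be an n-partite process function (n ≥ 1), with components w_k : ∏_{j≠k} A_j → X_k. Then the events (a | w(a)) satisfy pairwise exclusivity: for any two distinct outcome strings a ≠ a' in ∏_k A_k, there exists a party k such that a_k ≠ a'_k and w_k(a_{∖k}) = w_k(a'_{∖k}). -/
import Mathlib


noncomputable section

/-- A (multipartite) process function over an index type `ι`: for every local
intervention `f = (f_k)_k` (each `f_k : X_k → A_k`) there is exactly one
fixed point `x ∈ ∏_k X_k` with `w (f (x)) = x` (unique fixed-point property). -/
def IsProcessFunction {ι : Type} {A X : ι → Type}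
    (w : (∀ k, A k) → ∀ k, X k) : Prop :=
  ∀ f : ∀ k, X k → A k, ∃! x : ∀ k, X k, (w fun k => f k (x k)) = x

/-- `w` is non-self-signaling: its `k`-th component does not depend on the
`k`-th party's own output. -/
def NonSelfSignaling {ι : Type} {A X : ι → Type}
    (w : (∀ k, A k) → ∀ k, X k) : Prop :=
  ∀ (k : ι) (a a' : ∀ j, A j), (∀ j, j ≠ k → a j = a' j) → w a k = w a' k

/-- Extend a family defined on `{j // j ≠ k}` by a value at `k`. -/
def extendAt {ι : Type} [DecidableEq ι] {A : ι → Type} (k : ι)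
    (a : ∀ j : {j : ι // j ≠ k}, A j) (b : A k) : ∀ j, A j :=
  fun j => if h : j = k then cast (congrArg A h).symm b else a ⟨j, h⟩

/-- The `k`-th component of a (non-self-signaling) `w`, as a function
`w_k : ∏_{j ≠ k} A_j → X_k` of the other parties' outputs. -/
def component {ι : Type} [DecidableEq ι] {A X : ι → Type}
    [∀ k, Nonempty (A k)] (w : (∀ k, A k) → ∀ k, X k) (k : ι)
    (a : ∀ j : {j : ι // j ≠ k}, A j) : X k :=
  w (extendAt k a (Classical.arbitrary (A k))) k

/-- The reduced function `w^{f_k} : ∏_{j≠k} A_j → ∏_{j≠k} X_j`, defined by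
`w^{f_k}(a_{∖k}) = w_{∖k}(a_{∖k}, f_k(w_k(a_{∖k})))`. -/
def reducedFn {ι : Type} [DecidableEq ι] {A X : ι → Type}
    [∀ k, Nonempty (A k)] (w : (∀ k, A k) → ∀ k, X k) (k : ι)
    (f : X k → A k) (a : ∀ j : {j : ι // j ≠ k}, A j) :
    ∀ j : {j : ι // j ≠ k}, X j :=
  fun j => w (extendAt k a (f (component w k a))) j

/-- The output-reduced function `w^{a_k}`: the reduced function of the
constant intervention `f_k ≡ b`, `w^{b}(a_{∖k}) = w_{∖k}(a_{∖k}, b)`. -/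
def outputReducedFn {ι : Type} [DecidableEq ι] {A X : ι → Type}
    [∀ k, Nonempty (A k)] (w : (∀ k, A k) → ∀ k, X k) (k : ι) (b : A k) :
    (∀ j : {j : ι // j ≠ k}, A j) → ∀ j : {j : ι // j ≠ k}, X j :=
  reducedFn w k (fun _ => b)

/-- Every process function is non-self-signaling. -/
lemma processFunction_nss {ι : Type} [DecidableEq ι] {A X : ι → Type}
    (w : (∀ k, A k) → ∀ k, X k) (hw : IsProcessFunction w) :
    NonSelfSignaling w := by
  classical
  intro k a a' hagree
  by_contra hne
  set f : ∀ j, X j → A j :=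
    Function.update (fun j (_ : X j) => a j) k
      (fun x => if x = w a k then a k else a' k) with hf
  obtain ⟨x, hx, huniq⟩ := hw f
  have h1 : (w fun j => f j (w a j)) = w a := by
    have h : (fun j => f j (w a j)) = a := by
      funext j
      rcases eq_or_ne j k with rfl | hjk
      · simp [hf]
      · simp [hf, Function.update_of_ne hjk]
    rw [h]
  have h2 : (w fun j => f j (w a' j)) = w a' := by
    have h : (fun j => f j (w a' j)) = a' := by
      funext j
      rcases eq_or_ne j k with rfl | hjk
      · simp [hf, Ne.symm hne]
      · simp [hf, Function.update_of_ne hjk, hagree j hjk]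
    rw [h]
  exact hne (congrFun ((huniq _ h1).trans (huniq _ h2).symm) k)

/-- The component function agrees with `w` itself. -/
lemma component_eq {ι : Type} [DecidableEq ι] {A X : ι → Type}
    [∀ k, Nonempty (A k)] (w : (∀ k, A k) → ∀ k, X k)
    (hnss : NonSelfSignaling w) (k : ι) (a : ∀ j, A j) :
    component w k (fun j => a j) = w a k := by
  apply hnss
  intro j hj
  simp [extendAt, hj]

/-- **Pairwise exclusivity of the events of a process function**: if `w` is an
`n`-partite process function with components `w_k : ∏_{j≠k} A_j → X_k`, then
for any two distinct outcome strings `a ≠ a'` there is a party `k` at which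
the outcomes differ, `a_k ≠ a'_k`, while the settings agree,
`w_k(a_{∖k}) = w_k(a'_{∖k})`. -/
theorem processFunction_pairwise_exclusivity
    {n : ℕ} (hn : 1 ≤ n)
    (A X : Fin n → Type) [∀ k, Fintype (A k)] [∀ k, Nonempty (A k)]
    [∀ k, Fintype (X k)] [∀ k, Nonempty (X k)]
    (w : (∀ k, A k) → ∀ k, X k) (hw : IsProcessFunction w) :
    ∀ a a' : ∀ k, A k, a ≠ a' →
      ∃ k : Fin n, a k ≠ a' k ∧
        component w k (fun j => a j) = component w k (fun j => a' j) := by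
  classical
  have hnss : NonSelfSignaling w := processFunction_nss w hw
  intro a a' hne
  by_contra hcon
  push_neg at hcon
  have key : ∀ k, a k ≠ a' k → w a k ≠ w a' k := by
    intro k hk
    have h := hcon k hk
    rwa [component_eq w hnss, component_eq w hnss] at h
  set f : ∀ j, X j → A j := fun j x => if x = w a j then a j else a' j with hf
  obtain ⟨x, hx, huniq⟩ := hw f
  have h1 : (w fun j => f j (w a j)) = w a := by
    have h : (fun j => f j (w a j)) = a := by
      funext j; simp [hf]
    rw [h]
  have h2 : (w fun j => f j (w a' j)) = w a' := by
    have h : (fun j => f j (w a' j)) = a' := by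
      funext j
      by_cases hwj : w a' j = w a j
      · have haj : a j = a' j := by
          by_contra hj
          exact key j hj hwj.symm
        simp [hf, hwj, haj]
      · simp [hf, hwj]
    rw [h]
  have heq : w a = w a' := (huniq _ h1).trans (huniq _ h2).symm
  obtain ⟨k, hk⟩ : ∃ k, a k ≠ a' k := Function.ne_iff.mp hne
  exact key k hk (congrFun heq k)

end
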